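/- If G is a regular graph admitting an interval coloring and Δ(G) ≤ t ≤ W(G), where W(G) is the greatest number of colors in an interval coloring of G, then G has an interval t-coloring. -/

import Mathlib

open SimpleGraph

/-- `c` is an interval `t`-coloring of `G`: edges get colors in `{1,…,t}`, every color
`1,…,t` is used, adjacent edges get distinct colors, and the set of colors of edges
incident to any vertex is an interval of integers. -/
def IsIntervalColoring {V : Type*} (G : SimpleGraph V) (t : ℕ) (c : Sym2 V → ℕ) : Prop :=
  (∀ e ∈ G.edgeSet, 1 ≤ c e ∧ c e ≤ t) ∧
  (∀ i, 1 ≤ i → i ≤ t → ∃ e ∈ G.edgeSet, c e = i) ∧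
  (∀ v w₁ w₂, G.Adj v w₁ → G.Adj v w₂ → w₁ ≠ w₂ → c s(v, w₁) ≠ c s(v, w₂)) ∧
  (∀ v i j k, (∃ w, G.Adj v w ∧ c s(v, w) = i) → (∃ w, G.Adj v w ∧ c s(v, w) = k) →
    i ≤ j → j ≤ k → ∃ w, G.Adj v w ∧ c s(v, w) = j)

/-- `G` has an interval `t`-coloring. -/
def HasIntervalColoring {V : Type*} (G : SimpleGraph V) (t : ℕ) : Prop :=
  ∃ c : Sym2 V → ℕ, IsIntervalColoring G t c

/-- `G` is interval colorable (`G ∈ 𝔑`). -/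
def IntervalColorable {V : Type*} (G : SimpleGraph V) : Prop :=
  ∃ t : ℕ, 1 ≤ t ∧ HasIntervalColoring G t

/-- `w G`: the least number of colors in an interval coloring of `G`. -/
noncomputable def wNum {V : Type*} (G : SimpleGraph V) : ℕ :=
  sInf {t | HasIntervalColoring G t}

/-- `W G`: the greatest number of colors in an interval coloring of `G`. -/
noncomputable def WNum {V : Type*} (G : SimpleGraph V) : ℕ :=
  sSup {t | HasIntervalColoring G t}

/-- `G` is `r`-regular: every vertex has exactly `r` neighbors. -/
def IsRegularGraph {V : Type*} (G : SimpleGraph V) (r : ℕ) : Prop :=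
  ∀ v : V, (G.neighborSet v).ncard = r

/-- `c` is a proper edge coloring of `G` using colors `0,…,k-1`. -/
def IsProperEdgeColoring {V : Type*} (G : SimpleGraph V) (k : ℕ) (c : Sym2 V → ℕ) : Prop :=
  (∀ e ∈ G.edgeSet, c e < k) ∧
  (∀ v w₁ w₂, G.Adj v w₁ → G.Adj v w₂ → w₁ ≠ w₂ → c s(v, w₁) ≠ c s(v, w₂))

/-- The chromatic index `χ'(G)`. -/
noncomputable def edgeChromaticNumber {V : Type*} (G : SimpleGraph V) : ℕ :=
  sInf {k | ∃ c : Sym2 V → ℕ, IsProperEdgeColoring G k c}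

/-- `G` is 1-factorable: its edge set decomposes into perfect matchings. -/
def IsOneFactorable {V : Type*} (G : SimpleGraph V) : Prop :=
  ∃ (n : ℕ) (f : Fin n → SimpleGraph.Subgraph G),
    (∀ i, (f i).IsPerfectMatching) ∧
    (∀ e ∈ G.edgeSet, ∃! i, e ∈ (f i).edgeSet)

/-- The tensor (direct) product `G × H`. -/
def tensorProd {α β : Type*} (G : SimpleGraph α) (H : SimpleGraph β) :
    SimpleGraph (α × β) where
  Adj p q := G.Adj p.1 q.1 ∧ H.Adj p.2 q.2
  symm := ⟨fun p q ⟨h₁, h₂⟩ => ⟨h₁.symm, h₂.symm⟩⟩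
  loopless := ⟨fun p h => G.loopless.irrefl p.1 h.1⟩

/-- The strong tensor (semistrong) product `G ⊗ H`. -/
def strongTensorProd {α β : Type*} (G : SimpleGraph α) (H : SimpleGraph β) :
    SimpleGraph (α × β) where
  Adj p q := (G.Adj p.1 q.1 ∧ H.Adj p.2 q.2) ∨ (p.2 = q.2 ∧ G.Adj p.1 q.1)
  symm := ⟨fun p q h => by
    rcases h with ⟨h₁, h₂⟩ | ⟨h₁, h₂⟩
    · exact Or.inl ⟨h₁.symm, h₂.symm⟩
    · exact Or.inr ⟨h₁.symm, h₂.symm⟩⟩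
  loopless := ⟨fun p h => by
    rcases h with ⟨h₁, _⟩ | ⟨_, h₁⟩ <;> exact G.loopless.irrefl p.1 h₁⟩

/-- The strong product `G ⊠ H`. -/
def strongProd {α β : Type*} (G : SimpleGraph α) (H : SimpleGraph β) :
    SimpleGraph (α × β) where
  Adj p q := (G.Adj p.1 q.1 ∧ H.Adj p.2 q.2) ∨ (p.1 = q.1 ∧ H.Adj p.2 q.2) ∨
    (p.2 = q.2 ∧ G.Adj p.1 q.1)
  symm := ⟨fun p q h => by
    rcases h with ⟨h₁, h₂⟩ | ⟨h₁, h₂⟩ | ⟨h₁, h₂⟩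
    · exact Or.inl ⟨h₁.symm, h₂.symm⟩
    · exact Or.inr (Or.inl ⟨h₁.symm, h₂.symm⟩)
    · exact Or.inr (Or.inr ⟨h₁.symm, h₂.symm⟩)⟩
  loopless := ⟨fun p h => by
    rcases h with ⟨h₁, _⟩ | ⟨_, h₂⟩ | ⟨_, h₁⟩
    · exact G.loopless.irrefl p.1 h₁
    · exact H.loopless.irrefl p.2 h₂
    · exact G.loopless.irrefl p.1 h₁⟩

/-- The lexicographic product (composition) `G[H]`. -/
def lexProd {α β : Type*} (G : SimpleGraph α) (H : SimpleGraph β) :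
    SimpleGraph (α × β) where
  Adj p q := G.Adj p.1 q.1 ∨ (p.1 = q.1 ∧ H.Adj p.2 q.2)
  symm := ⟨fun p q h => by
    rcases h with h₁ | ⟨h₁, h₂⟩
    · exact Or.inl h₁.symm
    · exact Or.inr ⟨h₁.symm, h₂.symm⟩⟩
  loopless := ⟨fun p h => by
    rcases h with h₁ | ⟨_, h₂⟩
    · exact G.loopless.irrefl p.1 h₁
    · exact H.loopless.irrefl p.2 h₂⟩

/-!
In an interval `t`-coloring of an `r`-regular graph, a vertex that sees the top color `t` sees
exactly the colors `t + 1 - r, …, t`. So if `r < t`, recoloring every edge of color `t` with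
`t - r` keeps every palette an interval and gives an interval `(t - 1)`-coloring. Starting from
an interval `W(G)`-coloring, which exists because the number of colors is bounded by the number
of edges, this descends to every `t ≥ r`.
-/

theorem Set.OrdConnected.eq_Icc_of_isGreatest {S : Set ℕ} {t : ℕ} (hS : S.OrdConnected)
    (ht : IsGreatest S t) : S = Set.Icc (t + 1 - S.ncard) t := by
  have hIcc : S = Set.Icc (sInf S) t := by
    rw [← ht.csSup_eq]
    exact (ht.nonempty.ordConnected_iff_of_bdd (OrderBot.bddBelow S) ht.bddAbove).1 hS
  have hle : sInf S ≤ t := Nat.sInf_le ht.1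
  have hcard : S.ncard = t + 1 - sInf S := by
    nth_rw 1 [hIcc]
    exact Set.ncard_Icc_nat _ _
  rw [hcard, show t + 1 - (t + 1 - sInf S) = sInf S by omega]
  exact hIcc

lemma image_update_id_Icc {r t : ℕ} (hr : 0 < r) :
    Function.update id t (t - r) '' Set.Icc (t + 1 - r) t = Set.Icc (t - r) (t - 1) := by
  ext x
  simp only [Set.mem_image, Set.mem_Icc, Function.update_apply, id]
  constructor
  · rintro ⟨y, hy, rfl⟩
    split_ifs <;> omega
  · intro hx
    by_cases hxr : x = t - r
    · exact ⟨t, by omega, by simp [hxr]⟩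
    · exact ⟨x, by omega, by rw [if_neg (by omega)]⟩

section IntervalColoring

variable {V : Type*} {G : SimpleGraph V} {t : ℕ} {c : Sym2 V → ℕ}

def palette (G : SimpleGraph V) (c : Sym2 V → ℕ) (v : V) : Set ℕ :=
  (fun w => c s(v, w)) '' G.neighborSet v

lemma palette_comp (g : ℕ → ℕ) (v : V) : palette G (g ∘ c) v = g '' palette G c v :=
  Set.image_comp g _ _

theorem isIntervalColoring_iff :
    IsIntervalColoring G t c ↔
      (∀ v, palette G c v ⊆ Set.Icc 1 t) ∧
      Set.Icc 1 t ⊆ c '' G.edgeSet ∧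
      (∀ v, (G.neighborSet v).InjOn (fun w => c s(v, w))) ∧
      (∀ v, (palette G c v).OrdConnected) := by
  constructor
  · rintro ⟨hbound, hsurj, hprop, hint⟩
    refine ⟨fun v => ?_, fun i hi => ?_, fun v w₁ h₁ w₂ h₂ h => ?_, fun v => ⟨?_⟩⟩
    · rintro _ ⟨w, hw, rfl⟩
      exact hbound _ hw
    · obtain ⟨e, he, rfl⟩ := hsurj i hi.1 hi.2
      exact ⟨e, he, rfl⟩
    · by_contra hne
      exact hprop v w₁ w₂ h₁ h₂ hne h
    · rintro _ ⟨w, hw, rfl⟩ _ ⟨w', hw', rfl⟩ j hj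
      exact hint v _ j _ ⟨w, hw, rfl⟩ ⟨w', hw', rfl⟩ hj.1 hj.2
  · rintro ⟨hbound, hsurj, hinj, hconn⟩
    refine ⟨fun e he => ?_, fun i hi₁ hi₂ => hsurj ⟨hi₁, hi₂⟩,
      fun v w₁ w₂ h₁ h₂ hne h => hne (hinj v h₁ h₂ h), fun v i j k hi hk hij hjk => ?_⟩
    · induction e using Sym2.ind with
      | h v w => exact hbound v ⟨w, he, rfl⟩
    · exact (hconn v).out hi hk ⟨hij, hjk⟩

theorem IsIntervalColoring.comp {t' : ℕ} (hc : IsIntervalColoring G t c) (g : ℕ → ℕ)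
    (hg : ∀ v, Set.MapsTo g (palette G c v) (Set.Icc 1 t') ∧ Set.InjOn g (palette G c v) ∧
      (g '' palette G c v).OrdConnected)
    (hsurj : Set.Icc 1 t' ⊆ g '' Set.Icc 1 t) :
    IsIntervalColoring G t' (g ∘ c) := by
  obtain ⟨-, hcsurj, hcinj, -⟩ := isIntervalColoring_iff.1 hc
  refine isIntervalColoring_iff.2 ⟨fun v => ?_, ?_, fun v => ?_, fun v => ?_⟩
  · rw [palette_comp]
    exact (hg v).1.image_subset
  · rw [Set.image_comp]
    exact hsurj.trans (Set.image_mono hcsurj)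
  · exact (hg v).2.1.comp (hcinj v) (Set.mapsTo_image _ _)
  · rw [palette_comp]
    exact (hg v).2.2

theorem IsIntervalColoring.palette_eq_Icc (hc : IsIntervalColoring G t c) {v : V}
    (hv : t ∈ palette G c v) :
    palette G c v = Set.Icc (t + 1 - (G.neighborSet v).ncard) t := by
  obtain ⟨hbound, -, hinj, hconn⟩ := isIntervalColoring_iff.1 hc
  rw [← (hinj v).ncard_image]
  exact (hconn v).eq_Icc_of_isGreatest ⟨hv, fun x hx => (hbound v hx).2⟩

theorem IsIntervalColoring.update_id_palette {r : ℕ} (hc : IsIntervalColoring G t c)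
    (hr : IsRegularGraph G r) (hrt : r < t) (v : V) :
    Set.MapsTo (Function.update id t (t - r)) (palette G c v) (Set.Icc 1 (t - 1)) ∧
      Set.InjOn (Function.update id t (t - r)) (palette G c v) ∧
      (Function.update id t (t - r) '' palette G c v).OrdConnected := by
  obtain ⟨hbound, -, -, hconn⟩ := isIntervalColoring_iff.1 hc
  by_cases hv : t ∈ palette G c v
  · have hP : palette G c v = Set.Icc (t + 1 - r) t := hr v ▸ hc.palette_eq_Icc hv
    have hr₀ : 0 < r := by
      have := hP ▸ hv
      simp only [Set.mem_Icc] at this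
      omega
    rw [hP]
    refine ⟨Set.mapsTo_iff_image_subset.2 ?_, fun x hx y hy hxy => ?_, ?_⟩
    · rw [image_update_id_Icc hr₀]
      exact Set.Icc_subset_Icc (by omega) le_rfl
    · simp only [Set.mem_Icc, Function.update_apply, id] at hx hy hxy
      split_ifs at hxy <;> omega
    · rw [image_update_id_Icc hr₀]
      exact Set.ordConnected_Icc
  · have hid : Set.EqOn (Function.update id t (t - r)) id (palette G c v) :=
      fun x hx => Function.update_of_ne (ne_of_mem_of_not_mem hx hv) _ _
    refine ⟨fun x hx => ?_, hid.injOn_iff.2 (Set.injOn_id _), ?_⟩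
    · have hxt : x ≠ t := ne_of_mem_of_not_mem hx hv
      have := hbound v hx
      rw [hid hx]
      simp only [id, Set.mem_Icc] at this ⊢
      omega
    · rw [hid.image_eq_self]
      exact hconn v

theorem IsIntervalColoring.hasIntervalColoring_pred {r : ℕ} (hc : IsIntervalColoring G t c)
    (hr : IsRegularGraph G r) (hrt : r < t) : HasIntervalColoring G (t - 1) := by
  refine ⟨_, hc.comp _ (hc.update_id_palette hr hrt) fun x hx => ⟨x, ?_, ?_⟩⟩
  · simp only [Set.mem_Icc] at hx ⊢
    omega
  · simp only [Set.mem_Icc] at hx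
    exact Function.update_of_ne (by omega) _ _

theorem IsIntervalColoring.le_ncard_edgeSet (hc : IsIntervalColoring G t c)
    (hE : G.edgeSet.Finite) : t ≤ G.edgeSet.ncard :=
  calc t = (Set.Icc 1 t).ncard := by simp
    _ ≤ (c '' G.edgeSet).ncard :=
      Set.ncard_le_ncard ((isIntervalColoring_iff.1 hc).2.1) (hE.image c)
    _ ≤ G.edgeSet.ncard := Set.ncard_image_le hE

theorem HasIntervalColoring.of_le {r s : ℕ} (hr : IsRegularGraph G r)
    (hs : HasIntervalColoring G s) (hrt : r ≤ t) (hts : t ≤ s) : HasIntervalColoring G t := by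
  induction s, hts using Nat.le_induction with
  | base => exact hs
  | succ s hts ih =>
    obtain ⟨c, hc⟩ := hs
    exact ih (hc.hasIntervalColoring_pred hr (by omega))

end IntervalColoring

/-- If `G` is `r`-regular and interval colorable, then for every `t` with
`Δ(G) = r ≤ t ≤ W(G)`, `G` has an interval `t`-coloring. -/
theorem regular_interval_spectrum {V : Type*} [Fintype V]
    (G : SimpleGraph V) (r : ℕ) (hr : IsRegularGraph G r)
    (hG : IntervalColorable G) (t : ℕ) (h₁ : r ≤ t) (h₂ : t ≤ WNum G) :
    HasIntervalColoring G t := by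
  obtain ⟨t₀, -, ht₀⟩ := hG
  have hbdd : BddAbove {s | HasIntervalColoring G s} :=
    ⟨G.edgeSet.ncard, fun _ ⟨_, hc⟩ => hc.le_ncard_edgeSet G.edgeSet.toFinite⟩
  exact (Nat.sSup_mem ⟨t₀, ht₀⟩ hbdd).of_le hr h₁ h₂
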